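/- Let ℒ be the dcpo ℕ × ℕ × (ℕ ∪ {∞}) with the order described below, Σℒ its Scott space, and (Σℒ)_⊤ the space obtained by adjoining a fresh point ⊤ whose closed sets are the Scott-closed proper subsets of ℒ together with ℒ ∪ {⊤}. Then (Σℒ)_⊤ is a sober space, but its Scott power space Σ K((Σℒ)_⊤) — the poset of nonempty compact saturated subsets of (Σℒ)_⊤ under the Smyth order, with the Scott topology — is not sober. In particular, there exists a sober space whose Scott power space is not sober. -/

import Mathlib

open Set Topology TopologicalSpace

universe u v

/-- A subset of a topological space is *saturated* if it equals the intersection of the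
open sets containing it. -/
def IsSat {X : Type u} [TopologicalSpace X] (A : Set X) : Prop :=
  A = ⋂₀ {U : Set X | IsOpen U ∧ A ⊆ U}

/-- The saturation `↑a` of a point `a` : the intersection of all open sets containing `a`. -/
def satPt {X : Type u} [TopologicalSpace X] (a : X) : Set X :=
  ⋂₀ {U : Set X | IsOpen U ∧ a ∈ U}

/-- `KS X` is the collection of all nonempty compact saturated subsets of `X`. -/
def KS (X : Type u) [TopologicalSpace X] : Type u :=
  {K : Set X // K.Nonempty ∧ IsCompact K ∧ IsSat K}

/-- The *Smyth order* on `KS X` : `K ≤ L` iff `L ⊆ K` (reverse inclusion). -/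
instance KS.instPartialOrder {X : Type u} [TopologicalSpace X] : PartialOrder (KS X) where
  le K L := L.1 ⊆ K.1
  le_refl K := subset_rfl
  le_trans K L M h₁ h₂ := by intro x hx; exact h₁ (h₂ hx)
  le_antisymm K L h₁ h₂ := by exact Subtype.ext (subset_antisymm h₂ h₁)

/-- The *upper Vietoris topology* on `KS X`, generated by the sets `□U = {K | K ⊆ U}`
for `U` open in `X`.  The resulting space is the Smyth power space `P_S(X)`. -/
def upperVietoris (X : Type u) [TopologicalSpace X] : TopologicalSpace (KS X) :=
  TopologicalSpace.generateFrom
    {S : Set (KS X) | ∃ U : Set X, IsOpen U ∧ S = {K : KS X | K.1 ⊆ U}}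

/-- Scott-open subsets of a preorder: upper sets inaccessible by suprema of
(nonempty) directed sets. -/
def ScottOpen {P : Type u} [Preorder P] (U : Set P) : Prop :=
  IsUpperSet U ∧ ∀ d : Set P, d.Nonempty → DirectedOn (· ≤ ·) d →
    ∀ a : P, IsLUB d a → a ∈ U → (d ∩ U).Nonempty

/-- The Scott topology of a preorder. -/
def scottTop (P : Type u) [Preorder P] : TopologicalSpace P where
  IsOpen := ScottOpen
  isOpen_univ := ⟨isUpperSet_univ, fun d hd _ _ _ _ => by simpa using hd⟩
  isOpen_inter := by
    rintro U V ⟨hUu, hUd⟩ ⟨hVu, hVd⟩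
    refine ⟨hUu.inter hVu, fun d hd hdir a ha haUV => ?_⟩
    obtain ⟨x, hxd, hxU⟩ := hUd d hd hdir a ha haUV.1
    obtain ⟨y, hyd, hyV⟩ := hVd d hd hdir a ha haUV.2
    obtain ⟨z, hzd, hxz, hyz⟩ := hdir x hxd y hyd
    exact ⟨z, hzd, hUu hxz hxU, hVu hyz hyV⟩
  isOpen_sUnion := by
    intro S hS
    refine ⟨isUpperSet_sUnion fun s hs => (hS s hs).1, fun d hd hdir a ha haU => ?_⟩
    obtain ⟨t, htS, hat⟩ := haU
    obtain ⟨x, hxd, hxt⟩ := (hS t htS).2 d hd hdir a ha hat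
    exact ⟨x, hxd, t, htS, hxt⟩

/-- A topological space is *well-filtered* if for every nonempty family of nonempty compact
saturated sets which is filtered under reverse inclusion and every open `U` containing the
intersection of the family, some member of the family is contained in `U`. -/
def WellFiltered (X : Type u) [TopologicalSpace X] : Prop :=
  ∀ 𝒦 : Set (Set X), 𝒦.Nonempty →
    (∀ K ∈ 𝒦, K.Nonempty ∧ IsCompact K ∧ IsSat K) →
    (∀ K₁ ∈ 𝒦, ∀ K₂ ∈ 𝒦, ∃ K₃ ∈ 𝒦, K₃ ⊆ K₁ ∧ K₃ ⊆ K₂) →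
    ∀ U : Set X, IsOpen U → ⋂₀ 𝒦 ⊆ U → ∃ K ∈ 𝒦, K ⊆ U

/-- The specialization order of a topological space: `x ≤ y` iff `x ∈ cl {y}`. -/
def specLE {X : Type u} [TopologicalSpace X] (x y : X) : Prop := x ∈ closure {y}

/-- Least upper bound with respect to an explicit relation. -/
def RelLUB {P : Type u} (r : P → P → Prop) (d : Set P) (a : P) : Prop :=
  (∀ x ∈ d, r x a) ∧ ∀ b : P, (∀ x ∈ d, r x b) → r a b

/-- Scott openness with respect to an explicit relation. -/
def RelScottOpen {P : Type u} (r : P → P → Prop) (U : Set P) : Prop :=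
  (∀ ⦃x y : P⦄, x ∈ U → r x y → y ∈ U) ∧
  ∀ d : Set P, d.Nonempty → DirectedOn r d → ∀ a : P, RelLUB r d a → a ∈ U → (d ∩ U).Nonempty

/-- A `d`-space (monotone convergence space): the specialization order is directed complete
and every open set is Scott open with respect to the specialization order. -/
def DSpace (X : Type u) [TopologicalSpace X] : Prop :=
  (∀ d : Set X, d.Nonempty → DirectedOn specLE d → ∃ a : X, RelLUB specLE d a) ∧
  ∀ U : Set X, IsOpen U → RelScottOpen specLE U

/-- A space is *sober* if every irreducible closed set is the closure of a unique point. -/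
def SoberSp (Z : Type u) [TopologicalSpace Z] : Prop :=
  ∀ A : Set Z, IsClosed A → IsIrreducible A → ∃! z : Z, A = closure {z}

/-- A closed set `A` is a *Rudin set* if there is a (nonempty) family of nonempty compact
saturated sets, filtered under reverse inclusion, such that `A` is a minimal closed set
meeting every member of the family. -/
def RudinSet {X : Type u} [TopologicalSpace X] (A : Set X) : Prop :=
  IsClosed A ∧
  ∃ 𝒦 : Set (Set X), 𝒦.Nonempty ∧
    (∀ K ∈ 𝒦, K.Nonempty ∧ IsCompact K ∧ IsSat K) ∧
    (∀ K₁ ∈ 𝒦, ∀ K₂ ∈ 𝒦, ∃ K₃ ∈ 𝒦, K₃ ⊆ K₁ ∧ K₃ ⊆ K₂) ∧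
    (∀ K ∈ 𝒦, (A ∩ K).Nonempty) ∧
    (∀ B : Set X, IsClosed B → (∀ K ∈ 𝒦, (B ∩ K).Nonempty) → B ⊆ A → B = A)

/-- A *Rudin space*: every irreducible closed subset is a Rudin set. -/
def RudinSpace (X : Type u) [TopologicalSpace X] : Prop :=
  ∀ A : Set X, IsClosed A → IsIrreducible A → RudinSet A

/-- A closed set `A` is *well-filtered determined* (WD) if every continuous map into a
well-filtered T₀ space sends it to a set whose closure is a point closure. -/
def WDSet {X : Type u} [TopologicalSpace X] (A : Set X) : Prop :=
  ∀ (Y : Type v) [TopologicalSpace Y] [T0Space Y], WellFiltered Y →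
    ∀ f : X → Y, Continuous f → ∃ y : Y, closure (f '' A) = closure {y}

/-- A *well-filtered determined (WD) space*: every irreducible closed subset is WD. -/
def WDSpace (X : Type u) [TopologicalSpace X] : Prop :=
  ∀ A : Set X, IsClosed A → IsIrreducible A → WDSet.{u, v} A

/-- Property S: for every irreducible closed set `A`, the family `{↑a : a ∈ A}` is an
irreducible subset of the Scott power space `Σ K(X)`, or
`◇A = {K ∈ K(X) : K ∩ A ≠ ∅}` is an irreducible closed subset of `Σ K(X)`. -/
def PropertyS (X : Type u) [TopologicalSpace X] : Prop :=
  ∀ A : Set X, IsClosed A → IsIrreducible A →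
    @IsIrreducible (KS X) (scottTop (KS X)) {K : KS X | ∃ a ∈ A, K.1 = satPt a} ∨
    (@IsClosed (KS X) (scottTop (KS X)) {K : KS X | (K.1 ∩ A).Nonempty} ∧
      @IsIrreducible (KS X) (scottTop (KS X)) {K : KS X | (K.1 ∩ A).Nonempty})

/-- The order of Jia's dcpo on `ℕ × ℕ × (ℕ ∪ {∞})`:
`(i₁,j₁,k₁) ≤ (i₂,j₂,k₂)` iff (`i₁ = i₂`, `j₁ = j₂` and `k₁ ≤ k₂`) or
(`i₂ = i₁ + 1`, `k₁ ≤ j₂` and `k₂ = ∞`). -/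
def LJiaLE (a b : ℕ × ℕ × WithTop ℕ) : Prop :=
  (a.1 = b.1 ∧ a.2.1 = b.2.1 ∧ a.2.2 ≤ b.2.2) ∨
  (b.1 = a.1 + 1 ∧ a.2.2 ≤ (b.2.1 : WithTop ℕ) ∧ b.2.2 = ⊤)

section ScottAux

variable {P : Type} [Preorder P]

lemma scottTop_isOpen_iff (U : Set P) : @IsOpen P (scottTop P) U ↔ ScottOpen U := Iff.rfl

lemma scottTop_isClosed_iff (C : Set P) : @IsClosed P (scottTop P) C ↔ ScottOpen Cᶜ := by
  rw [← @isOpen_compl_iff P C (scottTop P)]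
  exact Iff.rfl

lemma scottTop_isClosed_down (x : P) : @IsClosed P (scottTop P) {y | y ≤ x} := by
  rw [scottTop_isClosed_iff]
  constructor
  · intro a b hab ha hb
    exact ha (le_trans hab hb)
  · intro d hne hdir a hlub ha
    by_contra h
    have hall : ∀ z ∈ d, z ≤ x := by
      intro z hz
      by_contra hzx
      exact h ⟨z, hz, hzx⟩
    exact ha (hlub.2 hall)

end ScottAux

set_option linter.unusedSectionVars false

section JiaAux

variable {L : Type} [PartialOrder L]

/-- level -/
def jlvl (eL : L ≃ ℕ × ℕ × WithTop ℕ) (x : L) : ℕ := (eL x).1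
/-- fiber index -/
def jfib (eL : L ≃ ℕ × ℕ × WithTop ℕ) (x : L) : ℕ := (eL x).2.1
/-- height -/
def jht (eL : L ≃ ℕ × ℕ × WithTop ℕ) (x : L) : WithTop ℕ := (eL x).2.2
/-- point from coordinates -/
def jpt (eL : L ≃ ℕ × ℕ × WithTop ℕ) (i j : ℕ) (k : WithTop ℕ) : L := eL.symm (i, j, k)

variable (eL : L ≃ ℕ × ℕ × WithTop ℕ)

@[simp] lemma jpt_lvl (i j : ℕ) (k : WithTop ℕ) : jlvl eL (jpt eL i j k) = i := by
  simp [jlvl, jpt]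

@[simp] lemma jpt_fib (i j : ℕ) (k : WithTop ℕ) : jfib eL (jpt eL i j k) = j := by
  simp [jfib, jpt]

@[simp] lemma jpt_ht (i j : ℕ) (k : WithTop ℕ) : jht eL (jpt eL i j k) = k := by
  simp [jht, jpt]

lemma jpt_eta (x : L) : jpt eL (jlvl eL x) (jfib eL x) (jht eL x) = x := by
  simp [jlvl, jfib, jht, jpt]

lemma jeq_of_coords {x y : L} (h1 : jlvl eL x = jlvl eL y) (h2 : jfib eL x = jfib eL y)
    (h3 : jht eL x = jht eL y) : x = y := by
  have : eL x = eL y := by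
    have hx : eL x = (jlvl eL x, jfib eL x, jht eL x) := rfl
    have hy : eL y = (jlvl eL y, jfib eL y, jht eL y) := rfl
    rw [hx, hy, h1, h2, h3]
  exact eL.injective this

/-- Order-theoretic description of Scott-closed sets of Jia's dcpo. -/
def JClosed (C : Set L) : Prop :=
  (∀ ⦃x y : L⦄, x ≤ y → y ∈ C → x ∈ C) ∧
  (∀ i j : ℕ, (∀ n : ℕ, ∃ k : ℕ, n ≤ k ∧ jpt eL i j (k : ℕ) ∈ C) → jpt eL i j ⊤ ∈ C)


lemma wt_cases (k : WithTop ℕ) : k = ⊤ ∨ ∃ m : ℕ, k = (m : WithTop ℕ) := by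
  induction k using WithTop.recTopCoe with
  | top => exact Or.inl rfl
  | coe m => exact Or.inr ⟨m, rfl⟩

variable (horder : ∀ a b : L, a ≤ b ↔ LJiaLE (eL a) (eL b))
include horder

lemma jle_iff (x y : L) : x ≤ y ↔
    (jlvl eL x = jlvl eL y ∧ jfib eL x = jfib eL y ∧ jht eL x ≤ jht eL y) ∨
    (jlvl eL y = jlvl eL x + 1 ∧ jht eL x ≤ (jfib eL y : WithTop ℕ) ∧ jht eL y = ⊤) :=
  horder x y

lemma jle_level {x y : L} (h : x ≤ y) :
    jlvl eL y = jlvl eL x ∨ jlvl eL y = jlvl eL x + 1 := by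
  rcases (jle_iff eL horder x y).1 h with ⟨h1, _, _⟩ | ⟨h1, _, _⟩
  · exact Or.inl h1.symm
  · exact Or.inr h1

lemma jtop_maximal {x y : L} (hx : jht eL x = ⊤) (h : x ≤ y) : x = y := by
  rcases (jle_iff eL horder x y).1 h with ⟨h1, h2, h3⟩ | ⟨_, h2, _⟩
  · refine jeq_of_coords eL h1 h2 ?_
    rw [hx] at h3 ⊢
    exact (top_le_iff.1 h3).symm
  · rw [hx] at h2
    exact absurd h2 (by simp)

lemma jfiber_le {i j : ℕ} {k k' : WithTop ℕ} (h : k ≤ k') :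
    jpt eL i j k ≤ jpt eL i j k' := by
  rw [jle_iff eL horder]
  exact Or.inl (by simp [h])

lemma jcross_le {i j m : ℕ} {k : WithTop ℕ} (h : k ≤ (m : WithTop ℕ)) :
    jpt eL i j k ≤ jpt eL (i + 1) m ⊤ := by
  rw [jle_iff eL horder]
  exact Or.inr (by simp [h])

/-- the principal ideal -/
def jdown (x : L) : Set L := {z | z ≤ x}

lemma jdown_closed (x : L) : JClosed eL (jdown x) := by
  constructor
  · intro a b hab hb
    exact le_trans hab hb
  · intro i j h
    suffices hs : jlvl eL x = i ∧ jfib eL x = j ∧ jht eL x = ⊤ by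
      show jpt eL i j ⊤ ≤ x
      rw [← hs.1, ← hs.2.1, ← hs.2.2, jpt_eta]
    obtain ⟨k, hk, hkm⟩ := h (jfib eL x + 1)
    have h1 := hkm
    rcases (jle_iff eL horder _ _).1 h1 with ⟨e1, e2, e3⟩ | ⟨e1, e2, e3⟩
    · simp only [jpt_lvl, jpt_fib, jpt_ht] at e1 e2 e3
      refine ⟨e1.symm, e2.symm, ?_⟩
      -- jht x = ⊤ : otherwise pick a bigger k
      rcases wt_cases (jht eL x) with hx | ⟨m, hx⟩
      · exact hx
      · exfalso
        obtain ⟨k', hk', hkm'⟩ := h (max (m + 1) (jfib eL x + 1))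
        rcases (jle_iff eL horder _ _).1 hkm' with ⟨f1, f2, f3⟩ | ⟨f1, f2, f3⟩
        · simp only [jpt_ht, hx, Nat.cast_le] at f3
          omega
        · simp only [jpt_ht, Nat.cast_le] at f2
          omega
    · exfalso
      simp only [jpt_ht, Nat.cast_le] at e2
      omega

lemma jdown_proper (x : L) : jpt eL (jlvl eL x + 2) 0 0 ∉ jdown x := by
  intro h
  rcases jle_level eL horder h with h1 | h1 <;> simp [jpt_lvl] at h1 <;> omega

omit horder in
lemma jlevel_le_closed (N : ℕ) : JClosed eL {z | jlvl eL z ≤ N} ∨ True := Or.inr trivial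

lemma jlevelle_closed (N : ℕ) : JClosed eL {z : L | jlvl eL z ≤ N} := by
  constructor
  · intro a b hab hb
    rcases jle_level eL horder hab with h1 | h1 <;> simp only [mem_setOf_eq] at hb ⊢ <;> omega
  · intro i j h
    obtain ⟨k, _, hkm⟩ := h 0
    simpa using hkm

/-- Structure of directed suprema in Jia's dcpo. -/
lemma jia_dirSup (d : Set L) (hne : d.Nonempty) (hdir : DirectedOn (· ≤ ·) d) (a : L)
    (h : IsLUB d a) :
    a ∈ d ∨ (jht eL a = ⊤ ∧
      ∀ n : ℕ, ∃ k : ℕ, n ≤ k ∧ jpt eL (jlvl eL a) (jfib eL a) (k : ℕ) ∈ d) := by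
  by_cases hmax : ∃ m ∈ d, ∀ z ∈ d, z ≤ m
  · left
    obtain ⟨m, hm, hub⟩ := hmax
    have h1 : a ≤ m := h.2 hub
    have h2 : m ≤ a := h.1 hm
    rwa [le_antisymm h1 h2]
  · push_neg at hmax
    right
    -- no element has height ⊤
    have hfin : ∀ w ∈ d, jht eL w ≠ ⊤ := by
      intro w hw hwt
      obtain ⟨z, hz, hzw⟩ := hmax w hw
      obtain ⟨u, hu, hzu, hwu⟩ := hdir z hz w hw
      have := jtop_maximal eL horder hwt hwu
      exact hzw (this ▸ hzu)
    obtain ⟨x₀, hx₀⟩ := hne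
    -- all elements in the same fiber
    have hsame : ∀ z ∈ d, jlvl eL z = jlvl eL x₀ ∧ jfib eL z = jfib eL x₀ := by
      intro z hz
      obtain ⟨u, hu, hzu, hxu⟩ := hdir z hz x₀ hx₀
      have hz' : jlvl eL z = jlvl eL u ∧ jfib eL z = jfib eL u := by
        rcases (jle_iff eL horder _ _).1 hzu with ⟨f1, f2, _⟩ | ⟨_, _, f3⟩
        · exact ⟨f1, f2⟩
        · exact absurd f3 (hfin u hu)
      have hx' : jlvl eL x₀ = jlvl eL u ∧ jfib eL x₀ = jfib eL u := by
        rcases (jle_iff eL horder _ _).1 hxu with ⟨f1, f2, _⟩ | ⟨_, _, f3⟩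
        · exact ⟨f1, f2⟩
        · exact absurd f3 (hfin u hu)
      exact ⟨hz'.1.trans hx'.1.symm, hz'.2.trans hx'.2.symm⟩
    -- representation of elements of d
    have hrep : ∀ z ∈ d, ∃ m : ℕ, z = jpt eL (jlvl eL x₀) (jfib eL x₀) (m : ℕ) := by
      intro z hz
      rcases wt_cases (jht eL z) with hzk | ⟨m, hzk⟩
      · exact absurd hzk (hfin z hz)
      · refine ⟨m, ?_⟩
        rw [← (hsame z hz).1, ← (hsame z hz).2, ← hzk, jpt_eta]
    -- heights are unbounded
    have hub : ∀ n : ℕ, ∃ k : ℕ, n ≤ k ∧ jpt eL (jlvl eL x₀) (jfib eL x₀) (k : ℕ) ∈ d := by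
      intro n
      by_contra hcon
      push_neg at hcon
      -- then d has a maximum
      have hbd : ∀ z ∈ d, ∃ m : ℕ, m < n ∧ z = jpt eL (jlvl eL x₀) (jfib eL x₀) (m : ℕ) := by
        intro z hz
        obtain ⟨m, hm⟩ := hrep z hz
        refine ⟨m, ?_, hm⟩
        by_contra hmn
        exact hcon m (by omega) (hm ▸ hz)
      set S : Set ℕ := {m : ℕ | jpt eL (jlvl eL x₀) (jfib eL x₀) (m : ℕ) ∈ d} with hS
      have hSne : S.Nonempty := by
        obtain ⟨m, _, hm⟩ := hbd x₀ hx₀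
        exact ⟨m, by rw [mem_setOf_eq, ← hm]; exact hx₀⟩
      have hSbd : BddAbove S := by
        refine ⟨n, fun m hm => ?_⟩
        obtain ⟨m', hm', heq⟩ := hbd _ hm
        have : m = m' := by
          have := congrArg (jht eL) heq
          simpa [Nat.cast_inj] using this
        omega
      have hmem := Nat.sSup_mem hSne hSbd
      obtain ⟨z, hz, hzle⟩ := hmax (jpt eL (jlvl eL x₀) (jfib eL x₀) ((sSup S : ℕ) : WithTop ℕ)) hmem
      apply hzle
      obtain ⟨m, _, hm⟩ := hbd z hz
      have hmS : m ∈ S := by rw [hS, mem_setOf_eq, ← hm]; exact hz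
      rw [hm]
      exact jfiber_le eL horder (Nat.cast_le.2 (le_csSup hSbd hmS))
    -- identify the coordinates of a
    have hcoord : jlvl eL a = jlvl eL x₀ ∧ jfib eL a = jfib eL x₀ ∧ jht eL a = ⊤ := by
      obtain ⟨k, hk, hkd⟩ := hub (jfib eL a + 1)
      have hka : jpt eL (jlvl eL x₀) (jfib eL x₀) (k : ℕ) ≤ a := h.1 hkd
      rcases (jle_iff eL horder _ _).1 hka with ⟨f1, f2, _⟩ | ⟨_, f2, _⟩
      · simp only [jpt_lvl, jpt_fib] at f1 f2
        refine ⟨f1.symm, f2.symm, ?_⟩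
        rcases wt_cases (jht eL a) with hx | ⟨m, hx⟩
        · exact hx
        · exfalso
          obtain ⟨k', hk', hkd'⟩ := hub (max (m + 1) (jfib eL a + 1))
          have hka' : jpt eL (jlvl eL x₀) (jfib eL x₀) (k' : ℕ) ≤ a := h.1 hkd'
          rcases (jle_iff eL horder _ _).1 hka' with ⟨_, _, g3⟩ | ⟨_, g2, _⟩
          · simp only [jpt_ht, hx, Nat.cast_le] at g3
            omega
          · simp only [jpt_ht, Nat.cast_le] at g2
            omega
      · exfalso
        simp only [jpt_ht, Nat.cast_le] at f2
        omega
    rw [hcoord.1, hcoord.2.1]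
    exact ⟨hcoord.2.2, hub⟩

/-- Scott closedness in Jia's dcpo is the order-theoretic `JClosed`. -/
lemma jia_isClosed_iff (C : Set L) : @IsClosed L (scottTop L) C ↔ JClosed eL C := by
  rw [scottTop_isClosed_iff]
  constructor
  · rintro ⟨hup, hin⟩
    constructor
    · intro x y hxy hy
      by_contra hx
      exact (hup hxy hx) hy
    · intro i j hunb
      set d : Set L := {z | z ∈ C ∧ jlvl eL z = i ∧ jfib eL z = j ∧ jht eL z ≠ ⊤} with hd
      have hrep : ∀ z ∈ d, ∃ m : ℕ, z = jpt eL i j (m : ℕ) := by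
        rintro z ⟨_, h1, h2, h3⟩
        rcases wt_cases (jht eL z) with hzk | ⟨m, hzk⟩
        · exact absurd hzk h3
        · exact ⟨m, by rw [← h1, ← h2, ← hzk, jpt_eta]⟩
      have hmem : ∀ k : ℕ, jpt eL i j (k : ℕ) ∈ C → jpt eL i j (k : ℕ) ∈ d := by
        intro k hk
        exact ⟨hk, by simp, by simp, by simp⟩
      have hdne : d.Nonempty := by
        obtain ⟨k, _, hk⟩ := hunb 0
        exact ⟨_, hmem k hk⟩
      have hdir : DirectedOn (· ≤ ·) d := by
        intro z₁ h₁ z₂ h₂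
        obtain ⟨m₁, e₁⟩ := hrep z₁ h₁
        obtain ⟨m₂, e₂⟩ := hrep z₂ h₂
        rcases le_total m₁ m₂ with hle | hle
        · refine ⟨z₂, h₂, ?_, le_refl _⟩
          rw [e₁, e₂]
          exact jfiber_le eL horder (Nat.cast_le.2 hle)
        · refine ⟨z₁, h₁, le_refl _, ?_⟩
          rw [e₁, e₂]
          exact jfiber_le eL horder (Nat.cast_le.2 hle)
      have hlub : IsLUB d (jpt eL i j ⊤) := by
        constructor
        · intro z hz
          obtain ⟨m, e⟩ := hrep z hz
          rw [e]
          exact jfiber_le eL horder le_top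
        · intro b hb
          have hcoord : jlvl eL b = i ∧ jfib eL b = j ∧ jht eL b = ⊤ := by
            obtain ⟨k, hk, hkC⟩ := hunb (jfib eL b + 1)
            have hkb : jpt eL i j (k : ℕ) ≤ b := hb (hmem k hkC)
            rcases (jle_iff eL horder _ _).1 hkb with ⟨f1, f2, _⟩ | ⟨_, f2, _⟩
            · simp only [jpt_lvl, jpt_fib] at f1 f2
              refine ⟨f1.symm, f2.symm, ?_⟩
              rcases wt_cases (jht eL b) with hx | ⟨m, hx⟩
              · exact hx
              · exfalso
                obtain ⟨k', hk', hkC'⟩ := hunb (max (m + 1) (jfib eL b + 1))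
                have hkb' : jpt eL i j (k' : ℕ) ≤ b := hb (hmem k' hkC')
                rcases (jle_iff eL horder _ _).1 hkb' with ⟨_, _, g3⟩ | ⟨_, g2, _⟩
                · simp only [jpt_ht, hx, Nat.cast_le] at g3
                  omega
                · simp only [jpt_ht, Nat.cast_le] at g2
                  omega
            · exfalso
              simp only [jpt_ht, Nat.cast_le] at f2
              omega
          rw [jle_iff eL horder]
          left
          simp [hcoord.1, hcoord.2.1, hcoord.2.2]
      by_contra htop
      obtain ⟨z, hzd, hzC⟩ := hin d hdne hdir _ hlub htop
      exact hzC hzd.1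
  · rintro ⟨hlow, hlim⟩
    constructor
    · intro x y hxy hx
      intro hy
      exact hx (hlow hxy hy)
    · intro d hne hdir a hlub ha
      by_contra hcon
      have hsub : d ⊆ C := by
        intro z hz
        by_contra hzC
        exact hcon ⟨z, hz, hzC⟩
      rcases jia_dirSup eL horder d hne hdir a hlub with hd | ⟨htop, hunb⟩
      · exact ha (hsub hd)
      · apply ha
        have := hlim (jlvl eL a) (jfib eL a) (fun n => by
          obtain ⟨k, hk, hkd⟩ := hunb n
          exact ⟨k, hk, hsub hkd⟩)
        rwa [← htop, jpt_eta] at this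

lemma jia_oneLevel (C : Set L) (hcl : JClosed eL C) (ℓ : ℕ)
    (hS : ∀ c : ℕ, ∃ m : ℕ, c ≤ m ∧ jpt eL (ℓ + 1) m ⊤ ∈ C) :
    ∀ z : L, jlvl eL z = ℓ → z ∈ C := by
  have hfin : ∀ j n : ℕ, jpt eL ℓ j (n : ℕ) ∈ C := by
    intro j n
    obtain ⟨m, hm, hmC⟩ := hS n
    exact hcl.1 (jcross_le eL horder (Nat.cast_le.2 hm)) hmC
  intro z hz
  rcases wt_cases (jht eL z) with htop | ⟨k, hk⟩
  · have : jpt eL ℓ (jfib eL z) ⊤ ∈ C :=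
      hcl.2 ℓ (jfib eL z) (fun n => ⟨n, le_refl _, hfin _ n⟩)
    rwa [← hz, ← htop, jpt_eta] at this
  · have := hfin (jfib eL z) k
    rwa [← hz, ← hk, jpt_eta] at this

lemma jia_fullBelow (C : Set L) (hcl : JClosed eL C) :
    ∀ ℓ : ℕ, (∀ c : ℕ, ∃ m : ℕ, c ≤ m ∧ jpt eL (ℓ + 1) m ⊤ ∈ C) →
      ∀ z : L, jlvl eL z ≤ ℓ → z ∈ C := by
  intro ℓ
  induction ℓ with
  | zero =>
    intro hS z hz
    exact jia_oneLevel eL horder C hcl 0 hS z (Nat.le_zero.1 hz)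
  | succ ℓ ih =>
    intro hS z hz
    by_cases hz' : jlvl eL z = ℓ + 1
    · exact jia_oneLevel eL horder C hcl (ℓ + 1) hS z hz'
    · refine ih (fun c => ⟨c, le_refl _, ?_⟩) z (by omega)
      exact jia_oneLevel eL horder C hcl (ℓ + 1) hS _ (by simp)

lemma jia_bounded (C : Set L) (hcl : JClosed eL C) (hne : C.Nonempty)
    (hirr : ∀ C₁ C₂ : Set L, JClosed eL C₁ → JClosed eL C₂ → C ⊆ C₁ ∪ C₂ → C ⊆ C₁ ∨ C ⊆ C₂)
    (hpr : C ≠ univ) : ∃ N : ℕ, ∀ z ∈ C, jlvl eL z ≤ N := by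
  by_contra hunb
  push_neg at hunb
  -- a point not in C, of height ⊤
  obtain ⟨p₀, hp₀⟩ : ∃ p₀, p₀ ∉ C := by
    by_contra hall
    push_neg at hall
    exact hpr (eq_univ_of_forall hall)
  set a := jlvl eL p₀ with ha
  set p := jpt eL a (jfib eL p₀) ⊤ with hp
  have hpC : p ∉ C := by
    intro hmem
    apply hp₀
    refine hcl.1 ?_ hmem
    rw [jle_iff eL horder]
    exact Or.inl (by simp [hp, ha])
  have hplvl : jlvl eL p = a := by simp [hp]
  -- bounds on top points of high levels
  have hSbd : ∀ ℓ : ℕ, a ≤ ℓ → ∃ c : ℕ, ∀ m : ℕ, jpt eL (ℓ + 1) m ⊤ ∈ C → m ≤ c := by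
    intro ℓ hℓ
    by_contra hc
    push_neg at hc
    refine hpC (jia_fullBelow eL horder C hcl ℓ ?_ p (by omega))
    intro c
    obtain ⟨m, hm1, hm2⟩ := hc c
    exact ⟨m, le_of_lt hm2, hm1⟩
  -- the auxiliary closed set of points of level ≤ ℓ inside C
  have hDcl : ∀ ℓ : ℕ, JClosed eL {z | z ∈ C ∧ jlvl eL z ≤ ℓ} := by
    intro ℓ
    constructor
    · intro y w hyw hw
      refine ⟨hcl.1 hyw hw.1, ?_⟩
      rcases jle_level eL horder hyw with h1 | h1 <;> [skip; skip] <;>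
        · have := hw.2; omega
    · intro i j h
      obtain ⟨k, _, hk⟩ := h 0
      refine ⟨hcl.2 i j (fun n => ?_), by simpa using hk.2⟩
      obtain ⟨k', hk', hk'm⟩ := h n
      exact ⟨k', hk', hk'm.1⟩
  -- pass 1 : no top points at any level ≥ a
  have hSempty : ∀ ℓ : ℕ, a ≤ ℓ → ∀ m : ℕ, jpt eL ℓ m ⊤ ∉ C := by
    intro ℓ hℓ
    obtain ⟨c, hc⟩ := hSbd ℓ hℓ
    set G : Set L :=
      {z | (z ∈ C ∧ ℓ + 1 ≤ jlvl eL z) ∨ (jlvl eL z = ℓ ∧ jht eL z ≤ (c : WithTop ℕ))} with hG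
    have hGcl : JClosed eL G := by
      constructor
      · intro y w hyw hw
        rcases hw with ⟨hwC, hwl⟩ | ⟨hwl, hwh⟩
        · rcases (jle_iff eL horder y w).1 hyw with ⟨f1, f2, f3⟩ | ⟨f1, f2, f3⟩
          · exact Or.inl ⟨hcl.1 hyw hwC, by omega⟩
          · by_cases hyl : ℓ + 1 ≤ jlvl eL y
            · exact Or.inl ⟨hcl.1 hyw hwC, hyl⟩
            · have hylℓ : jlvl eL y = ℓ := by omega
              have hwrep : jpt eL (ℓ + 1) (jfib eL w) ⊤ ∈ C := by
                have h1 : jlvl eL w = ℓ + 1 := by omega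
                rw [← h1, ← f3, jpt_eta]
                exact hwC
              refine Or.inr ⟨hylℓ, le_trans f2 (Nat.cast_le.2 (hc _ hwrep))⟩
        · rcases (jle_iff eL horder y w).1 hyw with ⟨f1, f2, f3⟩ | ⟨f1, f2, f3⟩
          · exact Or.inr ⟨f1.trans hwl, le_trans f3 hwh⟩
          · rw [f3] at hwh
            exact absurd hwh (by simp)
      · intro i j h
        have hil : ℓ + 1 ≤ i := by
          obtain ⟨k, hk, hkG⟩ := h (c + 1)
          rcases hkG with ⟨_, h1⟩ | ⟨h1, h2⟩
          · simpa using h1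
          · exfalso
            simp only [jpt_ht, Nat.cast_le] at h2
            omega
        refine Or.inl ⟨hcl.2 i j (fun n => ?_), by simpa using hil⟩
        obtain ⟨k, hk, hkG⟩ := h n
        rcases hkG with ⟨h1, _⟩ | ⟨h1, _⟩
        · exact ⟨k, hk, h1⟩
        · exfalso
          simp only [jpt_lvl] at h1
          omega
    have hsub : C ⊆ {z | z ∈ C ∧ jlvl eL z ≤ ℓ} ∪ G := by
      intro z hz
      by_cases hzl : jlvl eL z ≤ ℓ
      · exact Or.inl ⟨hz, hzl⟩
      · exact Or.inr (Or.inl ⟨hz, by omega⟩)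
    rcases hirr _ G (hDcl ℓ) hGcl hsub with hCD | hCG
    · exfalso
      obtain ⟨z, hz, hzl⟩ := hunb ℓ
      exact absurd (hCD hz).2 (by omega)
    · intro m hm
      rcases hCG hm with ⟨_, h1⟩ | ⟨_, h2⟩
      · simp only [jpt_lvl] at h1; omega
      · simp only [jpt_ht] at h2
        exact absurd h2 (by simp)
  -- pass 2 : C lives above every level ≥ a
  have hpass2 : ∀ ℓ : ℕ, a ≤ ℓ → ∀ z ∈ C, ℓ + 1 ≤ jlvl eL z := by
    intro ℓ hℓ
    set G : Set L := {z | z ∈ C ∧ ℓ + 1 ≤ jlvl eL z} with hGdef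
    have hGcl : JClosed eL G := by
      constructor
      · intro y w hyw hw
        refine ⟨hcl.1 hyw hw.1, ?_⟩
        rcases (jle_iff eL horder y w).1 hyw with ⟨f1, f2, f3⟩ | ⟨f1, f2, f3⟩
        · have := hw.2; omega
        · by_cases hyl : ℓ + 1 ≤ jlvl eL y
          · exact hyl
          · exfalso
            have hwl : jlvl eL w = ℓ + 1 := by
              have := hw.2; omega
            have : jpt eL (ℓ + 1) (jfib eL w) ⊤ ∈ C := by
              rw [← hwl, ← f3, jpt_eta]; exact hw.1
            exact hSempty (ℓ + 1) (by omega) _ this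
      · intro i j h
        obtain ⟨k, _, hk⟩ := h 0
        refine ⟨hcl.2 i j (fun n => ?_), by simpa using hk.2⟩
        obtain ⟨k', hk', hk'm⟩ := h n
        exact ⟨k', hk', hk'm.1⟩
    have hsub : C ⊆ {z | z ∈ C ∧ jlvl eL z ≤ ℓ} ∪ G := by
      intro z hz
      by_cases hzl : jlvl eL z ≤ ℓ
      · exact Or.inl ⟨hz, hzl⟩
      · exact Or.inr ⟨hz, by omega⟩
    rcases hirr _ G (hDcl ℓ) hGcl hsub with hCD | hCG
    · exfalso
      obtain ⟨z, hz, hzl⟩ := hunb ℓ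
      exact absurd (hCD hz).2 (by omega)
    · intro z hz
      exact (hCG hz).2
  obtain ⟨z₀, hz₀⟩ := hne
  have := hpass2 (a + jlvl eL z₀) (by omega) z₀ hz₀
  omega

/-- Classification of proper irreducible closed subsets of Jia's dcpo:
they are principal ideals. -/
lemma jiaJ (C : Set L) (hcl : JClosed eL C) (hne : C.Nonempty)
    (hirr : ∀ C₁ C₂ : Set L, JClosed eL C₁ → JClosed eL C₂ → C ⊆ C₁ ∪ C₂ → C ⊆ C₁ ∨ C ⊆ C₂)
    (hpr : C ≠ univ) : ∃ x : L, C = jdown x := by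
  obtain ⟨N₀, hN₀⟩ := jia_bounded eL horder C hcl hne hirr hpr
  set T : Set ℕ := {i | ∃ z ∈ C, jlvl eL z = i} with hT
  have hTne : T.Nonempty := by
    obtain ⟨z₀, hz₀⟩ := hne
    exact ⟨jlvl eL z₀, z₀, hz₀, rfl⟩
  have hTbd : BddAbove T := by
    refine ⟨N₀, fun i hi => ?_⟩
    obtain ⟨z, hz, rfl⟩ := hi
    exact hN₀ z hz
  set N := sSup T with hN
  obtain ⟨zN, hzNC, hzNl⟩ : ∃ z ∈ C, jlvl eL z = N := Nat.sSup_mem hTne hTbd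
  have hNbd : ∀ z ∈ C, jlvl eL z ≤ N := fun z hz => le_csSup hTbd ⟨z, hz, rfl⟩
  -- all level-N points of C are in the same fiber
  have hfib : ∀ z ∈ C, jlvl eL z = N → jfib eL z = jfib eL zN := by
    by_contra hcon
    push_neg at hcon
    obtain ⟨z', hz'C, hz'l, hz'f⟩ := hcon
    have hBcl : ∀ w : L, JClosed eL {z | z ∈ C ∧ ¬(jlvl eL z = N ∧ jfib eL z = jfib eL w)} := by
      intro w
      constructor
      · intro y x hyx hx
        refine ⟨hcl.1 hyx hx.1, ?_⟩
        rintro ⟨hyl, hyf⟩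
        have hxl : jlvl eL x = N := by
          have h1 := hNbd x hx.1
          rcases jle_level eL horder hyx with h2 | h2 <;> omega
        rcases (jle_iff eL horder y x).1 hyx with ⟨f1, f2, f3⟩ | ⟨f1, f2, f3⟩
        · exact hx.2 ⟨hxl, by rw [← f2, hyf]⟩
        · omega
      · intro i j h
        have htopC : jpt eL i j ⊤ ∈ C := by
          refine hcl.2 i j (fun n => ?_)
          obtain ⟨k, hk, hkm⟩ := h n
          exact ⟨k, hk, hkm.1⟩
        refine ⟨htopC, ?_⟩
        rintro ⟨h1, h2⟩
        obtain ⟨k, _, hkm⟩ := h 0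
        refine hkm.2 ⟨?_, ?_⟩ <;> simp only [jpt_lvl, jpt_fib] at h1 h2 ⊢ <;>
          [exact h1; exact h2]
    have hsub : C ⊆ {z | z ∈ C ∧ ¬(jlvl eL z = N ∧ jfib eL z = jfib eL zN)} ∪
        {z | z ∈ C ∧ ¬(jlvl eL z = N ∧ jfib eL z = jfib eL z')} := by
      intro z hz
      by_cases hcase : jlvl eL z = N ∧ jfib eL z = jfib eL zN
      · refine Or.inr ⟨hz, ?_⟩
        rintro ⟨h1, h2⟩
        exact hz'f (by rw [← h2, hcase.2])
      · exact Or.inl ⟨hz, hcase⟩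
    rcases hirr _ _ (hBcl zN) (hBcl z') hsub with hC1 | hC2
    · exact (hC1 hzNC).2 ⟨hzNl, rfl⟩
    · exact (hC2 hz'C).2 ⟨hz'l, rfl⟩
  -- a maximum among the level-N points
  obtain ⟨x', hx'C, hx'l, hmaxN⟩ :
      ∃ x', x' ∈ C ∧ jlvl eL x' = N ∧ ∀ z ∈ C, jlvl eL z = N → z ≤ x' := by
    by_cases htc : jpt eL N (jfib eL zN) ⊤ ∈ C
    · refine ⟨jpt eL N (jfib eL zN) ⊤, htc, by simp, fun z hz hzl => ?_⟩
      rw [jle_iff eL horder]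
      exact Or.inl (by simp [hzl, hfib z hz hzl, le_top])
    · set S : Set ℕ := {m : ℕ | jpt eL N (jfib eL zN) (m : ℕ) ∈ C} with hS
      have hSne : S.Nonempty := by
        rcases wt_cases (jht eL zN) with h1 | ⟨m₀, h1⟩
        · exfalso
          apply htc
          rw [← hzNl, ← h1, jpt_eta]
          exact hzNC
        · refine ⟨m₀, ?_⟩
          show jpt eL N (jfib eL zN) (m₀ : ℕ) ∈ C
          rw [← hzNl, ← h1, jpt_eta]
          exact hzNC
      have hSbdd : BddAbove S := by
        by_contra hbd
        apply htc
        refine hcl.2 N (jfib eL zN) (fun n => ?_)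
        have : ¬ (∀ m ∈ S, m ≤ n) := fun hb => hbd ⟨n, hb⟩
        push_neg at this
        obtain ⟨m, hmS, hmn⟩ := this
        exact ⟨m, by omega, hmS⟩
      have hκ := Nat.sSup_mem hSne hSbdd
      refine ⟨jpt eL N (jfib eL zN) ((sSup S : ℕ) : WithTop ℕ), hκ, by simp, fun z hz hzl => ?_⟩
      rcases wt_cases (jht eL z) with h1 | ⟨m, h1⟩
      · exfalso
        apply htc
        rw [← hzl, ← hfib z hz hzl, ← h1, jpt_eta]
        exact hz
      · have hzrep : z = jpt eL N (jfib eL zN) (m : ℕ) := by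
          rw [← hzl, ← hfib z hz hzl, ← h1, jpt_eta]
        have hmS : m ∈ S := by rw [hS, mem_setOf_eq, ← hzrep]; exact hz
        rw [hzrep]
        exact jfiber_le eL horder (Nat.cast_le.2 (le_csSup hSbdd hmS))
  -- conclude via irreducibility
  have hDcl : JClosed eL {z | z ∈ C ∧ jlvl eL z ≠ N} := by
    constructor
    · intro y w hyw hw
      refine ⟨hcl.1 hyw hw.1, ?_⟩
      have h1 := hNbd w hw.1
      have h2 := hw.2
      rcases jle_level eL horder hyw with h3 | h3 <;> omega
    · intro i j h
      have htopC : jpt eL i j ⊤ ∈ C := by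
        refine hcl.2 i j (fun n => ?_)
        obtain ⟨k, hk, hkm⟩ := h n
        exact ⟨k, hk, hkm.1⟩
      obtain ⟨k, _, hkm⟩ := h 0
      have h2 := hkm.2
      refine ⟨htopC, ?_⟩
      simp only [jpt_lvl] at h2 ⊢
      exact h2
  have hsub : C ⊆ {z | z ∈ C ∧ jlvl eL z ≠ N} ∪ jdown x' := by
    intro z hz
    by_cases hzl : jlvl eL z = N
    · exact Or.inr (hmaxN z hz hzl)
    · exact Or.inl ⟨hz, hzl⟩
  rcases hirr _ _ hDcl (jdown_closed eL horder x') hsub with hC1 | hC2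
  · exact absurd hzNl (hC1 hzNC).2
  · refine ⟨x', Subset.antisymm hC2 (fun z hz => hcl.1 hz hx'C)⟩

omit horder in
lemma JClosed_univ : JClosed eL (univ : Set L) :=
  ⟨fun _ _ _ _ => trivial, fun _ _ _ => trivial⟩

omit horder in
lemma JClosed_inter {C₁ C₂ : Set L} (h₁ : JClosed eL C₁) (h₂ : JClosed eL C₂) :
    JClosed eL (C₁ ∩ C₂) := by
  constructor
  · intro x y hxy hy
    exact ⟨h₁.1 hxy hy.1, h₂.1 hxy hy.2⟩
  · intro i j h
    constructor
    · exact h₁.2 i j (fun n => by obtain ⟨k, hk, hkm⟩ := h n; exact ⟨k, hk, hkm.1⟩)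
    · exact h₂.2 i j (fun n => by obtain ⟨k, hk, hkm⟩ := h n; exact ⟨k, hk, hkm.2⟩)

/-- Compact subsets of Jia's dcpo have bounded levels. -/
lemma jiaK (Q : Set L) (hQc : @IsCompact L (scottTop L) Q) :
    ∃ N : ℕ, ∀ x ∈ Q, jlvl eL x ≤ N := by
  by_contra hcon
  push_neg at hcon
  choose g hg1 hg2 using hcon
  -- a sequence of points of Q with fast-growing levels
  set f : ℕ → L := fun t => Nat.rec (g 0) (fun _ prev => g (jlvl eL prev + 1)) t with hf
  have hfQ : ∀ t, f t ∈ Q := by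
    intro t
    cases t with
    | zero => exact hg1 0
    | succ t => exact hg1 _
  have hgrow : ∀ t, jlvl eL (f t) + 2 ≤ jlvl eL (f (t + 1)) := by
    intro t
    have : f (t + 1) = g (jlvl eL (f t) + 1) := rfl
    rw [this]
    have := hg2 (jlvl eL (f t) + 1)
    omega
  have hmono : ∀ s t, t < s → jlvl eL (f t) + 2 ≤ jlvl eL (f s) := by
    intro s
    induction s with
    | zero => omega
    | succ s ih =>
      intro t ht
      rcases Nat.lt_succ_iff_lt_or_eq.1 ht with h | h
      · have := ih t h
        have := hgrow s
        omega
      · rw [h]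
        exact hgrow s
  have hge : ∀ t, t ≤ jlvl eL (f t) := by
    intro t
    induction t with
    | zero => omega
    | succ t ih =>
      have := hgrow t
      omega
  -- decreasing closed sets
  set D : ℕ → Set L := fun n => {z | ∃ t, n ≤ t ∧ z ≤ f t} with hD
  have hDcl : ∀ n, JClosed eL (D n) := by
    intro n
    constructor
    · rintro x y hxy ⟨t, ht, hle⟩
      exact ⟨t, ht, le_trans hxy hle⟩
    · intro i j h
      obtain ⟨k₀, _, t₀, ht₀, hle₀⟩ := h 0
      have hsame : ∀ n' : ℕ, ∃ k : ℕ, n' ≤ k ∧ jpt eL i j (k : ℕ) ∈ jdown (f t₀) := by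
        intro n'
        obtain ⟨k, hk, t, ht, hle⟩ := h n'
        refine ⟨k, hk, ?_⟩
        have htt : t = t₀ := by
          by_contra hne
          have l1 : jlvl eL (f t) = i ∨ jlvl eL (f t) = i + 1 := by
            have := jle_level eL horder hle
            simpa using this
          have l2 : jlvl eL (f t₀) = i ∨ jlvl eL (f t₀) = i + 1 := by
            have := jle_level eL horder hle₀
            simpa using this
          rcases Nat.lt_or_ge t t₀ with hlt | hge'
          · have := hmono t₀ t hlt
            omega
          · have hlt : t₀ < t := by omega
            have := hmono t t₀ hlt
            omega
        rw [← htt]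
        exact hle
      have := (jdown_closed eL horder (f t₀)).2 i j hsame
      exact ⟨t₀, ht₀, this⟩
  have hDmono : ∀ m n : ℕ, m ≤ n → D n ⊆ D m := by
    rintro m n hmn z ⟨t, ht, hle⟩
    exact ⟨t, by omega, hle⟩
  -- compactness contradiction
  have hopen : ∀ n : ℕ, @IsOpen L (scottTop L) (D n)ᶜ := by
    intro n
    exact (@isOpen_compl_iff L (D n) (scottTop L)).2 ((jia_isClosed_iff eL horder _).2 (hDcl n))
  have hcover : Q ⊆ ⋃ n : ℕ, (D n)ᶜ := by
    intro z hz
    refine mem_iUnion.2 ⟨jlvl eL z + 2, ?_⟩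
    rintro ⟨t, ht, hle⟩
    have h1 := hge t
    rcases jle_level eL horder hle with h2 | h2 <;> omega
  have hdir : Directed (· ⊆ ·) (fun n : ℕ => (D n)ᶜ) := by
    intro m n
    refine ⟨max m n, ?_, ?_⟩ <;> [exact compl_subset_compl.2 (hDmono m _ (le_max_left _ _));
      exact compl_subset_compl.2 (hDmono n _ (le_max_right _ _))]
  obtain ⟨n, hn⟩ := @IsCompact.elim_directed_cover L (scottTop L) Q ℕ ⟨0⟩ hQc
    (fun n => (D n)ᶜ) hopen hcover hdir
  have : f n ∈ D n := ⟨n, le_refl _, le_refl _⟩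
  exact (hn (hfQ n)) this

/-- Filtered families of nonempty compact upper sets in Jia's dcpo have a common point. -/
lemma jiaWF (𝒬 : Set (Set L)) (hne : 𝒬.Nonempty)
    (hQ : ∀ Q ∈ 𝒬, Q.Nonempty ∧ @IsCompact L (scottTop L) Q ∧ IsUpperSet Q)
    (hfil : ∀ Q₁ ∈ 𝒬, ∀ Q₂ ∈ 𝒬, ∃ Q₃ ∈ 𝒬, Q₃ ⊆ Q₁ ∧ Q₃ ⊆ Q₂) :
    ∃ x : L, ∀ Q ∈ 𝒬, x ∈ Q := by
  set S : Set (Set L) := {D | JClosed eL D ∧ ∀ Q ∈ 𝒬, (D ∩ Q).Nonempty} with hSdef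
  have huniv : univ ∈ S := by
    refine ⟨JClosed_univ eL, fun Q hQm => ?_⟩
    simpa using (hQ Q hQm).1
  have hchain : ∀ c ⊆ S, IsChain (· ⊆ ·) c → c.Nonempty → ∃ lb ∈ S, ∀ s ∈ c, lb ⊆ s := by
    intro c hcS hchain hcne
    refine ⟨⋂₀ c, ⟨⟨?_, ?_⟩, ?_⟩, fun s hs => sInter_subset_of_mem hs⟩
    · intro x y hxy hy
      intro D hD
      exact (hcS hD).1.1 hxy (hy D hD)
    · intro i j h
      intro D hD
      refine (hcS hD).1.2 i j (fun n => ?_)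
      obtain ⟨k, hk, hkm⟩ := h n
      exact ⟨k, hk, hkm D hD⟩
    · intro Q hQm
      by_contra hempty
      have hQsub : Q ⊆ ⋃ D : c, (↑D : Set L)ᶜ := by
        intro z hz
        by_contra hzin
        simp only [mem_iUnion, mem_compl_iff, not_exists, not_not] at hzin
        exact hempty ⟨z, fun D hD => hzin ⟨D, hD⟩, hz⟩
      haveI hnec : Nonempty c := ⟨⟨hcne.choose, hcne.choose_spec⟩⟩
      have hdir : Directed (· ⊆ ·) (fun D : c => (↑D : Set L)ᶜ) := by
        intro D₁ D₂
        rcases hchain.total D₁.2 D₂.2 with h | h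
        · exact ⟨D₁, le_refl _, compl_subset_compl.2 h⟩
        · exact ⟨D₂, compl_subset_compl.2 h, le_refl _⟩
      obtain ⟨D, hD⟩ := @IsCompact.elim_directed_cover L (scottTop L) Q c hnec
        (hQ Q hQm).2.1 (fun D : c => (↑D : Set L)ᶜ)
        (fun D : c => (@isOpen_compl_iff L _ (scottTop L)).2
          ((jia_isClosed_iff eL horder _).2 (hcS D.2).1)) hQsub hdir
      obtain ⟨z, hz1, hz2⟩ := (hcS D.2).2 Q hQm
      exact (hD hz2) hz1
  obtain ⟨M, hMsub, hMmin⟩ := zorn_superset_nonempty S hchain univ huniv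
  have hMS : M ∈ S := hMmin.prop
  obtain ⟨Q₀, hQ₀⟩ := hne
  have hMne : M.Nonempty := by
    obtain ⟨z, hz, _⟩ := hMS.2 Q₀ hQ₀
    exact ⟨z, hz⟩
  by_cases hMuniv : M = univ
  · exfalso
    obtain ⟨N, hN⟩ := jiaK eL horder Q₀ (hQ Q₀ hQ₀).2.1
    have hDS : {z : L | jlvl eL z ≤ N} ∉ S := by
      intro hmem
      have h1 : M ⊆ {z : L | jlvl eL z ≤ N} :=
        hMmin.2 hmem (by rw [hMuniv]; exact subset_univ _)
      have h2 : jpt eL (N + 1) 0 0 ∈ M := by rw [hMuniv]; trivial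
      have := h1 h2
      simp only [mem_setOf_eq, jpt_lvl] at this
      omega
    have : ∃ Q₁ ∈ 𝒬, ({z : L | jlvl eL z ≤ N} ∩ Q₁) = ∅ := by
      by_contra hcon
      push_neg at hcon
      exact hDS ⟨jlevelle_closed eL horder N, fun Q hQm => hcon Q hQm⟩
    obtain ⟨Q₁, hQ₁, hQ₁e⟩ := this
    obtain ⟨Q₂, hQ₂, h20, h21⟩ := hfil Q₀ hQ₀ Q₁ hQ₁
    obtain ⟨z, hz⟩ := (hQ Q₂ hQ₂).1
    have hzD : z ∈ {z : L | jlvl eL z ≤ N} := hN z (h20 hz)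
    rw [eq_empty_iff_forall_notMem] at hQ₁e
    exact hQ₁e z ⟨hzD, h21 hz⟩
  · have hirr : ∀ C₁ C₂ : Set L, JClosed eL C₁ → JClosed eL C₂ → M ⊆ C₁ ∪ C₂ →
        M ⊆ C₁ ∨ M ⊆ C₂ := by
      intro C₁ C₂ h₁ h₂ hsub
      by_contra hcon
      push_neg at hcon
      have key : ∀ C : Set L, JClosed eL C → ¬ M ⊆ C → ∃ Q ∈ 𝒬, (M ∩ C ∩ Q) = ∅ := by
        intro C hC hMC
        by_contra hcon'
        push_neg at hcon'
        have hmem : M ∩ C ∈ S := ⟨JClosed_inter eL hMS.1 hC,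
          fun Q hQm => hcon' Q hQm⟩
        have := hMmin.2 hmem inter_subset_left
        exact hMC (fun z hz => (this hz).2)
      obtain ⟨Q₁, hQ₁, he₁⟩ := key C₁ h₁ hcon.1
      obtain ⟨Q₂, hQ₂, he₂⟩ := key C₂ h₂ hcon.2
      obtain ⟨Q₃, hQ₃, h31, h32⟩ := hfil Q₁ hQ₁ Q₂ hQ₂
      obtain ⟨z, hzM, hzQ₃⟩ := hMS.2 Q₃ hQ₃
      rcases hsub hzM with hz1 | hz2
      · rw [eq_empty_iff_forall_notMem] at he₁
        exact he₁ z ⟨⟨hzM, hz1⟩, h31 hzQ₃⟩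
      · rw [eq_empty_iff_forall_notMem] at he₂
        exact he₂ z ⟨⟨hzM, hz2⟩, h32 hzQ₃⟩
    obtain ⟨x, hx⟩ := jiaJ eL horder M hMS.1 hMne hirr hMuniv
    refine ⟨x, fun Q hQm => ?_⟩
    obtain ⟨z, hzM, hzQ⟩ := hMS.2 Q hQm
    rw [hx] at hzM
    exact (hQ Q hQm).2.2 hzM hzQ

end JiaAux

section YAux

variable {L : Type} [PartialOrder L] (eL : L ≃ ℕ × ℕ × WithTop ℕ)
variable (horder : ∀ a b : L, a ≤ b ↔ LJiaLE (eL a) (eL b))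
variable {Y : Type} [tY : TopologicalSpace Y] (e : Y ≃ Option L)
variable (hclosed : ∀ B : Set Y, IsClosed B ↔
      (B = univ ∨ ∃ C : Set L, @IsClosed L (scottTop L) C ∧ C ≠ univ ∧
        B = e ⁻¹' (Option.some '' C)))

include horder hclosed

omit horder hclosed in
lemma jyT_notin (C : Set L) : e.symm none ∉ e ⁻¹' (Option.some '' C) := by
  intro hmem
  rw [mem_preimage, Equiv.apply_symm_apply] at hmem
  obtain ⟨w, _, hw⟩ := hmem
  exact Option.some_ne_none w hw

omit horder hclosed in
lemma jsome_ne_yT (x : L) : e.symm (Option.some x) ≠ e.symm none := by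
  intro h
  exact Option.some_ne_none x (e.symm.injective h)

omit horder hclosed in
lemma jmemY (z : Y) : z = e.symm none ∨ ∃ x : L, z = e.symm (Option.some x) := by
  rcases h : e z with _ | x
  · left
    rw [← h, Equiv.symm_apply_apply]
  · right
    exact ⟨x, by rw [← h, Equiv.symm_apply_apply]⟩

omit horder hclosed in
lemma jpre_mono (C₁ C₂ : Set L)
    (h : e ⁻¹' (Option.some '' C₁) ⊆ e ⁻¹' (Option.some '' C₂)) : C₁ ⊆ C₂ := by
  intro z hz
  have h1 : e.symm (Option.some z) ∈ e ⁻¹' (Option.some '' C₁) := by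
    rw [mem_preimage, Equiv.apply_symm_apply]
    exact ⟨z, hz, rfl⟩
  obtain ⟨w, hw, hweq⟩ := by
    have := h h1
    rwa [mem_preimage, Equiv.apply_symm_apply] at this
  rwa [← Option.some_injective L hweq]

omit horder in
lemma jyT_mem_open (U : Set Y) (hU : IsOpen U) (hUne : U.Nonempty) : e.symm none ∈ U := by
  rcases (hclosed Uᶜ).1 hU.isClosed_compl with h | ⟨C, _, _, hCeq⟩
  · exfalso
    obtain ⟨z, hz⟩ := hUne
    have : z ∈ Uᶜ := by rw [h]; trivial
    exact this hz
  · by_contra hcon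
    have : e.symm none ∈ Uᶜ := hcon
    rw [hCeq] at this
    exact jyT_notin e C this

lemma jdown_Yclosed (x : L) : IsClosed (e ⁻¹' (Option.some '' jdown x)) := by
  refine (hclosed _).2 (Or.inr ⟨jdown x, (jia_isClosed_iff eL horder _).2
    (jdown_closed eL horder x), ?_, rfl⟩)
  intro h
  exact jdown_proper eL horder x (by rw [h]; trivial)

omit horder in
lemma jclos_yT : closure {e.symm none} = (univ : Set Y) := by
  rcases (hclosed (closure {e.symm none})).1 isClosed_closure with h | ⟨C, _, _, hCeq⟩
  · exact h
  · exfalso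
    have : e.symm none ∈ closure {e.symm none} := subset_closure rfl
    rw [hCeq] at this
    exact jyT_notin e C this

lemma jclos_some (x : L) :
    closure {e.symm (Option.some x)} = e ⁻¹' (Option.some '' jdown x) := by
  refine Subset.antisymm ?_ ?_
  · refine closure_minimal ?_ (jdown_Yclosed eL horder e hclosed x)
    intro z hz
    rw [mem_singleton_iff] at hz
    rw [hz, mem_preimage, Equiv.apply_symm_apply]
    exact ⟨x, le_refl x, rfl⟩
  · rcases (hclosed (closure {e.symm (Option.some x)})).1 isClosed_closure with h |
      ⟨C, hCcl, _, hCeq⟩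
    · rw [h]
      exact subset_univ _
    · have hxC : x ∈ C := by
        have hmem : e.symm (Option.some x) ∈ closure {e.symm (Option.some x)} :=
          subset_closure rfl
        rw [hCeq, mem_preimage, Equiv.apply_symm_apply] at hmem
        obtain ⟨w, hw, hweq⟩ := hmem
        rwa [← Option.some_injective L hweq]
      rw [hCeq]
      intro z hz
      rw [mem_preimage] at hz ⊢
      obtain ⟨w, hw, hweq⟩ := hz
      refine ⟨w, ?_, hweq⟩
      exact ((jia_isClosed_iff eL horder C).1 hCcl).1 hw hxC

/-- Part A : `Y` is sober. -/
lemma jia_soberY : SoberSp Y := by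
  intro A hA hAirr
  rcases (hclosed A).1 hA with hAu | ⟨C, hCcl, hCne, hAeq⟩
  · refine ⟨e.symm none, ?_, ?_⟩
    · show A = closure {e.symm none}
      rw [hAu, jclos_yT e hclosed]
    intro z hz
    rcases jmemY e z with rfl | ⟨x, rfl⟩
    · rfl
    · exfalso
      have : e.symm none ∈ e ⁻¹' (Option.some '' jdown x) := by
        rw [← jclos_some eL horder e hclosed, ← hz, hAu]
        trivial
      exact jyT_notin e _ this
  · have hCj : JClosed eL C := (jia_isClosed_iff eL horder C).1 hCcl
    have hCnonempty : C.Nonempty := by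
      obtain ⟨a, ha⟩ := hAirr.nonempty
      rw [hAeq, mem_preimage] at ha
      obtain ⟨x, hx, _⟩ := ha
      exact ⟨x, hx⟩
    have hCirr : ∀ C₁ C₂ : Set L, JClosed eL C₁ → JClosed eL C₂ → C ⊆ C₁ ∪ C₂ →
        C ⊆ C₁ ∨ C ⊆ C₂ := by
      intro C₁ C₂ h₁ h₂ hsub
      have hproper : ∀ C' : Set L, C' ∩ C ≠ univ := by
        intro C' h
        apply hCne
        refine eq_univ_of_forall (fun z => ?_)
        have : z ∈ C' ∩ C := by rw [h]; trivial
        exact this.2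
      have hBcl : ∀ C' : Set L, JClosed eL C' →
          IsClosed (e ⁻¹' (Option.some '' (C' ∩ C))) := by
        intro C' hC'
        exact (hclosed _).2 (Or.inr ⟨C' ∩ C, (jia_isClosed_iff eL horder _).2
          (JClosed_inter eL hC' hCj), hproper C', rfl⟩)
      have hAsub : A ⊆ e ⁻¹' (Option.some '' (C₁ ∩ C)) ∪ e ⁻¹' (Option.some '' (C₂ ∩ C)) := by
        intro a ha
        rw [hAeq, mem_preimage] at ha
        obtain ⟨x, hx, hxe⟩ := ha
        rcases hsub hx with h | h
        · exact Or.inl (by rw [mem_preimage, ← hxe]; exact ⟨x, ⟨h, hx⟩, rfl⟩)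
        · exact Or.inr (by rw [mem_preimage, ← hxe]; exact ⟨x, ⟨h, hx⟩, rfl⟩)
      rcases (isPreirreducible_iff_isClosed_union_isClosed.1 hAirr.2) _ _
        (hBcl C₁ h₁) (hBcl C₂ h₂) hAsub with h | h
      · refine Or.inl (fun x hx => ?_)
        have hmem : e.symm (Option.some x) ∈ A := by
          rw [hAeq, mem_preimage, Equiv.apply_symm_apply]
          exact ⟨x, hx, rfl⟩
        have := h hmem
        rw [mem_preimage, Equiv.apply_symm_apply] at this
        obtain ⟨w, hw, hweq⟩ := this
        have := Option.some_injective L hweq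
        rw [← this]
        exact hw.1
      · refine Or.inr (fun x hx => ?_)
        have hmem : e.symm (Option.some x) ∈ A := by
          rw [hAeq, mem_preimage, Equiv.apply_symm_apply]
          exact ⟨x, hx, rfl⟩
        have := h hmem
        rw [mem_preimage, Equiv.apply_symm_apply] at this
        obtain ⟨w, hw, hweq⟩ := this
        have := Option.some_injective L hweq
        rw [← this]
        exact hw.1
    obtain ⟨x, hx⟩ := jiaJ eL horder C hCj hCnonempty hCirr hCne
    refine ⟨e.symm (Option.some x), ?_, ?_⟩
    · rw [hAeq, hx]
      exact (jclos_some eL horder e hclosed x).symm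
    · intro z hz
      rcases jmemY e z with rfl | ⟨x', rfl⟩
      · exfalso
        have h1 : e.symm none ∈ A := by
          rw [hz, jclos_yT e hclosed]
          trivial
        rw [hAeq] at h1
        exact jyT_notin e C h1
      · have h1 : e ⁻¹' (Option.some '' jdown x') = e ⁻¹' (Option.some '' jdown x) := by
          rw [← jclos_some eL horder e hclosed, ← hz, hAeq, hx]
        have h2 : x' ≤ x := jpre_mono e _ _ h1.le (le_refl x')
        have h3 : x ≤ x' := jpre_mono e _ _ h1.ge (le_refl x)
        rw [le_antisymm h2 h3]
/-- Part B : the Scott power space of `Y` is not sober. -/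
lemma jia_notSoberKS : ¬ @SoberSp (KS Y) (scottTop (KS Y)) := by
  classical
  intro hs
  -- opens of Y are upper w.r.t. the order of L
  have hopen_upper : ∀ U : Set Y, IsOpen U → ∀ x x' : L, x ≤ x' →
      e.symm (Option.some x) ∈ U → e.symm (Option.some x') ∈ U := by
    intro U hU x x' hxx' hx
    rcases (hclosed Uᶜ).1 hU.isClosed_compl with h | ⟨C, hCcl, _, hCeq⟩
    · exfalso
      have : e.symm (Option.some x) ∈ Uᶜ := by rw [h]; trivial
      exact this hx
    · by_contra hcon
      have h1 : e.symm (Option.some x') ∈ Uᶜ := hcon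
      rw [hCeq, mem_preimage, Equiv.apply_symm_apply] at h1
      obtain ⟨w, hw, hweq⟩ := h1
      rw [Option.some_injective L hweq] at hw
      have h2 : x ∈ C := ((jia_isClosed_iff eL horder C).1 hCcl).1 hxx' hw
      have h3 : e.symm (Option.some x) ∈ Uᶜ := by
        rw [hCeq, mem_preimage, Equiv.apply_symm_apply]
        exact ⟨x, h2, rfl⟩
      exact h3 hx
  -- a criterion for saturation
  have hsat_of : ∀ A : Set Y, (∀ z, z ∉ A → ∃ U, IsOpen U ∧ A ⊆ U ∧ z ∉ U) → IsSat A := by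
    intro A h
    apply Subset.antisymm
    · intro z hz
      exact mem_sInter.2 (fun U hU => hU.2 hz)
    · intro z hz
      by_contra hzA
      obtain ⟨U, hU1, hU2, hU3⟩ := h z hzA
      exact hU3 (mem_sInter.1 hz U ⟨hU1, hU2⟩)
  -- the compact saturated sets ↑x ∪ {⊤}
  have hKPne : ∀ x : L, (insert (e.symm none)
      ((fun w => e.symm (Option.some w)) '' {w : L | x ≤ w}) : Set Y).Nonempty :=
    fun x => ⟨_, mem_insert _ _⟩
  have hKPcompact : ∀ x : L, IsCompact (insert (e.symm none)
      ((fun w => e.symm (Option.some w)) '' {w : L | x ≤ w}) : Set Y) := by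
    intro x
    apply isCompact_of_finite_subcover
    intro ι U hUo hcov
    have hxmem : e.symm (Option.some x) ∈ insert (e.symm none)
        ((fun w => e.symm (Option.some w)) '' {w : L | x ≤ w}) :=
      mem_insert_iff.2 (Or.inr ⟨x, le_refl x, rfl⟩)
    obtain ⟨i₀, hi₀⟩ := mem_iUnion.1 (hcov hxmem)
    refine ⟨{i₀}, ?_⟩
    intro z hz
    refine mem_iUnion₂.2 ⟨i₀, Finset.mem_singleton_self i₀, ?_⟩
    rcases mem_insert_iff.1 hz with rfl | ⟨w, hw, rfl⟩
    · exact jyT_mem_open e hclosed (U i₀) (hUo i₀) ⟨_, hi₀⟩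
    · exact hopen_upper (U i₀) (hUo i₀) x w hw hi₀
  have hKPsat : ∀ x : L, IsSat (insert (e.symm none)
      ((fun w => e.symm (Option.some w)) '' {w : L | x ≤ w}) : Set Y) := by
    intro x
    apply hsat_of
    intro z hz
    rcases jmemY e z with rfl | ⟨w, rfl⟩
    · exact absurd (mem_insert _ _) hz
    · refine ⟨(e ⁻¹' (Option.some '' jdown w))ᶜ,
        (jdown_Yclosed eL horder e hclosed w).isOpen_compl, ?_, ?_⟩
      · intro u hu
        rcases mem_insert_iff.1 hu with rfl | ⟨v, hv, rfl⟩
        · exact jyT_notin e _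
        · intro hmem
          rw [mem_preimage, Equiv.apply_symm_apply] at hmem
          obtain ⟨u', hu', hueq⟩ := hmem
          rw [Option.some_injective L hueq] at hu'
          exact hz (mem_insert_iff.2 (Or.inr ⟨w, le_trans hv hu', rfl⟩))
      · intro hmem
        apply hmem
        rw [mem_preimage, Equiv.apply_symm_apply]
        exact ⟨w, le_refl w, rfl⟩
  let KP : L → KS Y := fun x => ⟨insert (e.symm none)
      ((fun w => e.symm (Option.some w)) '' {w : L | x ≤ w}), hKPne x, hKPcompact x, hKPsat x⟩
  -- the top element {⊤}
  have htopsat : IsSat ({e.symm none} : Set Y) := by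
    apply hsat_of
    intro z hz
    rcases jmemY e z with rfl | ⟨w, rfl⟩
    · exact absurd rfl hz
    · refine ⟨(e ⁻¹' (Option.some '' jdown w))ᶜ,
        (jdown_Yclosed eL horder e hclosed w).isOpen_compl, ?_, ?_⟩
      · intro u hu
        rw [mem_singleton_iff] at hu
        rw [hu]
        exact jyT_notin e _
      · intro hmem
        apply hmem
        rw [mem_preimage, Equiv.apply_symm_apply]
        exact ⟨w, le_refl w, rfl⟩
  let topK : KS Y := ⟨{e.symm none}, ⟨_, rfl⟩, isCompact_singleton, htopsat⟩
  have hmemTop : ∀ K : KS Y, e.symm none ∈ K.1 := by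
    intro K
    have hsat := K.2.2.2
    rw [hsat]
    exact mem_sInter.2 (fun U hU => jyT_mem_open e hclosed U hU.1 (K.2.1.mono hU.2))
  have hupperL : ∀ (K : KS Y) (x x' : L), x ≤ x' → e.symm (Option.some x) ∈ K.1 →
      e.symm (Option.some x') ∈ K.1 := by
    intro K x x' hxx' hx
    have hsat := K.2.2.2
    rw [hsat]
    exact mem_sInter.2 (fun U hU => hopen_upper U hU.1 x x' hxx' (hU.2 hx))
  have hKle : ∀ (K : KS Y) (x : L), e.symm (Option.some x) ∈ K.1 → K ≤ KP x := by
    intro K x hx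
    show (KP x).1 ⊆ K.1
    intro z hz
    rcases mem_insert_iff.1 hz with rfl | ⟨w, hw, rfl⟩
    · exact hmemTop K
    · exact hupperL K x w hw hx
  have hKPmono : ∀ x x' : L, x ≤ x' → KP x ≤ KP x' := by
    intro x x' h
    show (KP x').1 ⊆ (KP x).1
    intro z hz
    rcases mem_insert_iff.1 hz with rfl | ⟨w, hw, rfl⟩
    · exact mem_insert _ _
    · exact mem_insert_iff.2 (Or.inr ⟨w, le_trans h hw, rfl⟩)
  have hKP_ne_top : ∀ x : L, KP x ≠ topK := by
    intro x h
    have hm : e.symm (Option.some x) ∈ (KP x).1 :=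
      mem_insert_iff.2 (Or.inr ⟨x, le_refl x, rfl⟩)
    rw [h] at hm
    exact jsome_ne_yT e x hm
  -- the key Scott-continuity step along fiber chains
  have hstep3 : ∀ 𝒰 : Set (KS Y), ScottOpen 𝒰 → ∀ i j : ℕ,
      KP (jpt eL i j ⊤) ∈ 𝒰 → ∃ n : ℕ, KP (jpt eL i j (n : ℕ)) ∈ 𝒰 := by
    intro 𝒰 hU i j hmem
    set d : Set (KS Y) := Set.range (fun n : ℕ => KP (jpt eL i j (n : ℕ))) with hd
    have hdne : d.Nonempty := ⟨_, 0, rfl⟩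
    have hdir : DirectedOn (· ≤ ·) d := by
      rintro _ ⟨n, rfl⟩ _ ⟨m, rfl⟩
      rcases le_total n m with h | h
      · exact ⟨_, ⟨m, rfl⟩, hKPmono _ _ (jfiber_le eL horder (Nat.cast_le.2 h)), le_refl _⟩
      · exact ⟨_, ⟨n, rfl⟩, le_refl _, hKPmono _ _ (jfiber_le eL horder (Nat.cast_le.2 h))⟩
    have hlub : IsLUB d (KP (jpt eL i j ⊤)) := by
      constructor
      · rintro _ ⟨n, rfl⟩
        exact hKPmono _ _ (jfiber_le eL horder le_top)
      · intro b hb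
        show b.1 ⊆ (KP (jpt eL i j ⊤)).1
        intro z hz
        rcases jmemY e z with rfl | ⟨w, rfl⟩
        · exact mem_insert _ _
        · have hwn : ∀ n : ℕ, jpt eL i j (n : ℕ) ≤ w := by
            intro n
            have h2 : KP (jpt eL i j (n : ℕ)) ≤ b := hb ⟨n, rfl⟩
            have h3 : e.symm (Option.some w) ∈ (KP (jpt eL i j (n : ℕ))).1 := h2 hz
            rcases mem_insert_iff.1 h3 with h4 | ⟨v, hv, heq⟩
            · exact absurd h4 (jsome_ne_yT e w)
            · rwa [← Option.some_injective L (e.symm.injective heq)]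
          have hl : jlvl eL w = i ∧ jfib eL w = j := by
            have h1 := hwn (jfib eL w + 1)
            rcases (jle_iff eL horder _ _).1 h1 with ⟨f1, f2, _⟩ | ⟨_, f2, _⟩
            · simp only [jpt_lvl, jpt_fib] at f1 f2
              exact ⟨f1.symm, f2.symm⟩
            · exfalso
              simp only [jpt_ht, Nat.cast_le] at f2
              omega
          have hh : jht eL w = ⊤ := by
            rcases wt_cases (jht eL w) with h1 | ⟨m, h1⟩
            · exact h1
            · exfalso
              have h2 := hwn (m + 1)
              rcases (jle_iff eL horder _ _).1 h2 with ⟨_, _, f3⟩ | ⟨f1, _, _⟩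
              · rw [h1] at f3
                simp only [jpt_ht, Nat.cast_le] at f3
                omega
              · simp only [jpt_lvl] at f1
                omega
          have hweq : w = jpt eL i j ⊤ := by
            rw [← hl.1, ← hl.2, ← hh, jpt_eta]
          refine mem_insert_iff.2 (Or.inr ⟨w, ?_, rfl⟩)
          rw [hweq]
          exact le_refl _
    obtain ⟨K, hKd, hKU⟩ := hU.2 d hdne hdir _ hlub hmem
    obtain ⟨n, rfl⟩ := hKd
    exact ⟨n, hKU⟩
  -- climbing to higher levels
  have hstepFin : ∀ 𝒰 : Set (KS Y), ScottOpen 𝒰 → ∀ i j n : ℕ,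
      KP (jpt eL i j (n : ℕ)) ∈ 𝒰 →
      ∀ m : ℕ, n ≤ m → ∃ n' : ℕ, KP (jpt eL (i + 1) m (n' : ℕ)) ∈ 𝒰 := by
    intro 𝒰 hU i j n hmem m hm
    have h1 : KP (jpt eL i j (n : ℕ)) ≤ KP (jpt eL (i + 1) m ⊤) :=
      hKPmono _ _ (jcross_le eL horder (Nat.cast_le.2 hm))
    exact hstep3 𝒰 hU (i + 1) m (hU.1 h1 hmem)
  have hclimb : ∀ 𝒰 : Set (KS Y), ScottOpen 𝒰 → ∀ i j n : ℕ,
      KP (jpt eL i j (n : ℕ)) ∈ 𝒰 → ∀ t : ℕ,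
      ∃ c : ℕ, ∀ m : ℕ, c ≤ m → ∃ n' : ℕ, KP (jpt eL (i + 1 + t) m (n' : ℕ)) ∈ 𝒰 := by
    intro 𝒰 hU i j n hmem t
    induction t with
    | zero => exact ⟨n, fun m hm => hstepFin 𝒰 hU i j n hmem m hm⟩
    | succ t ih =>
      obtain ⟨c, hc⟩ := ih
      obtain ⟨n₁, hn₁⟩ := hc c (le_refl c)
      exact ⟨n₁, fun m hm => hstepFin 𝒰 hU (i + 1 + t) c n₁ hn₁ m hm⟩
  have hinit : ∀ 𝒰 : Set (KS Y), ScottOpen 𝒰 → ∀ K : KS Y, K ∈ 𝒰 → K ≠ topK →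
      ∃ i j n : ℕ, KP (jpt eL i j (n : ℕ)) ∈ 𝒰 := by
    intro 𝒰 hU K hK hKne
    have hx : ∃ x : L, e.symm (Option.some x) ∈ K.1 := by
      by_contra hcon
      push_neg at hcon
      apply hKne
      apply Subtype.ext
      apply Subset.antisymm
      · intro z hz
        rcases jmemY e z with rfl | ⟨w, rfl⟩
        · rfl
        · exact absurd hz (hcon w)
      · intro z hz
        rw [mem_singleton_iff] at hz
        rw [hz]
        exact hmemTop K
    obtain ⟨x, hx⟩ := hx
    have hKPU : KP x ∈ 𝒰 := hU.1 (hKle K x hx) hK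
    rcases wt_cases (jht eL x) with h1 | ⟨n, h1⟩
    · have hx2 : KP (jpt eL (jlvl eL x) (jfib eL x) ⊤) ∈ 𝒰 := by
        rw [← h1, jpt_eta]
        exact hKPU
      obtain ⟨n, hn⟩ := hstep3 𝒰 hU _ _ hx2
      exact ⟨_, _, n, hn⟩
    · refine ⟨jlvl eL x, jfib eL x, n, ?_⟩
      rw [← h1, jpt_eta]
      exact hKPU
  -- compactness of traces on L
  have hQcomp : ∀ K : KS Y,
      @IsCompact L (scottTop L) {x : L | e.symm (Option.some x) ∈ K.1} := by
    intro K
    refine @isCompact_of_finite_subcover L (scottTop L) _ ?_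
    intro ι U hUo hcov
    rcases eq_empty_or_nonempty {x : L | e.symm (Option.some x) ∈ K.1} with hQe | hQe
    · refine ⟨∅, ?_⟩
      rw [hQe]
      exact empty_subset _
    · set V : {i : ι // (U i).Nonempty} → Set Y := fun i =>
        insert (e.symm none) ((fun w => e.symm (Option.some w)) '' U i.1) with hV
      have hVopen : ∀ i, IsOpen (V i) := by
        intro i
        have hVc : (V i)ᶜ = e ⁻¹' (Option.some '' (U i.1)ᶜ) := by
          ext z
          rcases jmemY e z with rfl | ⟨w, rfl⟩
          · constructor
            · intro h
              exact absurd (mem_insert _ _) h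
            · intro h
              exact absurd h (jyT_notin e _)
          · constructor
            · intro h
              rw [mem_preimage, Equiv.apply_symm_apply]
              refine ⟨w, ?_, rfl⟩
              intro hwU
              exact h (mem_insert_iff.2 (Or.inr ⟨w, hwU, rfl⟩))
            · intro h hmem
              rw [mem_preimage, Equiv.apply_symm_apply] at h
              obtain ⟨w', hw', heq⟩ := h
              rw [Option.some_injective L heq] at hw'
              rcases mem_insert_iff.1 hmem with h1 | ⟨v, hv, heq2⟩
              · exact jsome_ne_yT e w h1
              · rw [Option.some_injective L (e.symm.injective heq2)] at hv
                exact hw' hv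
        have hproper : (U i.1)ᶜ ≠ univ := by
          intro h
          obtain ⟨x, hx⟩ := i.2
          have : x ∈ (U i.1)ᶜ := by rw [h]; trivial
          exact this hx
        have h2 : IsClosed (V i)ᶜ :=
          (hclosed _).2 (Or.inr ⟨(U i.1)ᶜ, (@isClosed_compl_iff L (scottTop L) (U i.1)).2 (hUo i.1), hproper, hVc⟩)
        have h3 := isOpen_compl_iff.2 h2
        rwa [compl_compl] at h3
      have hKcov : K.1 ⊆ ⋃ i, V i := by
        intro z hz
        obtain ⟨x₀, hx₀⟩ := hQe
        obtain ⟨i₀, hi₀⟩ := mem_iUnion.1 (hcov hx₀)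
        rcases jmemY e z with rfl | ⟨w, rfl⟩
        · exact mem_iUnion.2 ⟨⟨i₀, ⟨x₀, hi₀⟩⟩, mem_insert _ _⟩
        · have hw : w ∈ {x : L | e.symm (Option.some x) ∈ K.1} := hz
          obtain ⟨i, hi⟩ := mem_iUnion.1 (hcov hw)
          exact mem_iUnion.2 ⟨⟨i, ⟨w, hi⟩⟩, mem_insert_iff.2 (Or.inr ⟨w, hi, rfl⟩)⟩
      obtain ⟨t, ht⟩ := K.2.2.1.elim_finite_subcover V hVopen hKcov
      refine ⟨t.image Subtype.val, ?_⟩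
      intro x hx
      have hz : e.symm (Option.some x) ∈ K.1 := hx
      obtain ⟨i, hit, hmem⟩ := mem_iUnion₂.1 (ht hz)
      rcases mem_insert_iff.1 hmem with h1 | ⟨w, hw, heq⟩
      · exact absurd h1 (jsome_ne_yT e x)
      · rw [Option.some_injective L (e.symm.injective heq)] at hw
        exact mem_iUnion₂.2 ⟨i.1, Finset.mem_image.2 ⟨i, hit, rfl⟩, hw⟩
  -- {topK} is Scott open
  have htopopen : ScottOpen ({topK} : Set (KS Y)) := by
    constructor
    · intro K₁ K₂ hle h1
      rw [mem_singleton_iff] at h1 ⊢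
      subst h1
      apply Subtype.ext
      apply Subset.antisymm
      · exact hle
      · intro z hz
        rw [mem_singleton_iff] at hz
        rw [hz]
        exact hmemTop K₂
    · intro d hdne hdir K hlub hK
      rw [mem_singleton_iff] at hK
      subst hK
      by_contra hcon
      have hdnetop : ∀ K' ∈ d, K' ≠ topK := by
        intro K' hK' h
        exact hcon ⟨K', hK', by rw [h]; rfl⟩
      have hQne : ∀ K' ∈ d, {x : L | e.symm (Option.some x) ∈ K'.1}.Nonempty := by
        intro K' hK'
        by_contra hcon'
        push_neg at hcon'
        rw [eq_empty_iff_forall_notMem] at hcon'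
        apply hdnetop K' hK'
        apply Subtype.ext
        apply Subset.antisymm
        · intro z hz
          rcases jmemY e z with rfl | ⟨w, rfl⟩
          · rfl
          · exact absurd hz (hcon' w)
        · intro z hz
          rw [mem_singleton_iff] at hz
          rw [hz]
          exact hmemTop K'
      obtain ⟨x, hx⟩ := jiaWF eL horder
        ((fun K' : KS Y => {x : L | e.symm (Option.some x) ∈ K'.1}) '' d)
        (hdne.image _)
        (by
          rintro Q ⟨K', hK', rfl⟩
          exact ⟨hQne K' hK', hQcomp K',
            fun x x' hxx' hxm => hupperL K' x x' hxx' hxm⟩)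
        (by
          rintro Q₁ ⟨K₁, hK₁, rfl⟩ Q₂ ⟨K₂, hK₂, rfl⟩
          obtain ⟨K₃, hK₃, h31, h32⟩ := hdir K₁ hK₁ K₂ hK₂
          exact ⟨_, ⟨K₃, hK₃, rfl⟩, fun z hz => h31 hz, fun z hz => h32 hz⟩)
      have hubKP : KP x ∈ upperBounds d := by
        intro K' hK'
        exact hKle K' x (hx _ ⟨K', hK', rfl⟩)
      have hle := hlub.2 hubKP
      have : e.symm (Option.some x) ∈ (topK : KS Y).1 :=
        hle (mem_insert_iff.2 (Or.inr ⟨x, le_refl x, rfl⟩))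
      exact jsome_ne_yT e x this
  -- the irreducible closed set 𝒜 = K(Y) \ {topK}
  have hAclosed : @IsClosed (KS Y) (scottTop (KS Y)) {K : KS Y | K ≠ topK} := by
    rw [← @isOpen_compl_iff (KS Y) _ (scottTop (KS Y))]
    have hceq : {K : KS Y | K ≠ topK}ᶜ = {topK} := by
      ext K
      simp [mem_compl_iff, mem_singleton_iff]
    rw [hceq]
    exact htopopen
  have hAirr : @IsIrreducible (KS Y) (scottTop (KS Y)) {K : KS Y | K ≠ topK} := by
    constructor
    · exact ⟨KP (jpt eL 0 0 ⊤), hKP_ne_top _⟩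
    · intro u v hu hv hau hav
      have hu' : ScottOpen u := hu
      have hv' : ScottOpen v := hv
      obtain ⟨Ku, hKu1, hKu2⟩ := hau
      obtain ⟨Kv, hKv1, hKv2⟩ := hav
      obtain ⟨i₁, j₁, n₁, h₁⟩ := hinit u hu' Ku hKu2 hKu1
      obtain ⟨i₂, j₂, n₂, h₂⟩ := hinit v hv' Kv hKv2 hKv1
      -- climb both to the common level i₁+1+(i₂+1) = i₂+1+(i₁+1) ... use explicit levels
      obtain ⟨c₁, hc₁⟩ := hclimb u hu' i₁ j₁ n₁ h₁ (i₂ + 1)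
      obtain ⟨c₂, hc₂⟩ := hclimb v hv' i₂ j₂ n₂ h₂ (i₁ + 1)
      have hlev : i₂ + 1 + (i₁ + 1) = i₁ + 1 + (i₂ + 1) := by omega
      obtain ⟨m₁, hm₁⟩ := hc₁ c₁ (le_refl c₁)
      obtain ⟨m₂, hm₂⟩ := hc₂ (max c₂ (c₁ + 1)) (le_max_left _ _)
      rw [hlev] at hm₂
      -- a common smaller compact set
      set zc : L := jpt eL (i₁ + 1 + (i₂ + 1) + 1) (max m₁ m₂) ⊤ with hzc
      have hzu : KP zc ∈ u := by
        refine hu'.1 (hKPmono _ _ ?_) hm₁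
        exact jcross_le eL horder (Nat.cast_le.2 (le_max_left _ _))
      have hzv : KP zc ∈ v := by
        refine hv'.1 (hKPmono _ _ ?_) hm₂
        exact jcross_le eL horder (Nat.cast_le.2 (le_max_right _ _))
      exact ⟨KP zc, hKP_ne_top _, hzu, hzv⟩
  -- soberness gives a contradiction
  obtain ⟨K₀, hK₀, _⟩ := hs _ hAclosed hAirr
  have hK₀mem : K₀ ∈ {K : KS Y | K ≠ topK} := by
    rw [hK₀]
    exact @subset_closure (KS Y) (scottTop (KS Y)) ({K₀} : Set (KS Y)) K₀ rfl
  have hsubdown : {K : KS Y | K ≠ topK} ⊆ {K : KS Y | K ≤ K₀} := by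
    rw [hK₀]
    refine @closure_minimal (KS Y) (scottTop (KS Y)) _ _ ?_ (scottTop_isClosed_down K₀)
    intro K hK
    rw [mem_singleton_iff] at hK
    rw [hK]
    exact le_refl K₀
  have hp1 : K₀.1 ⊆ (KP (jpt eL 0 0 ⊤)).1 := hsubdown (hKP_ne_top _)
  have hp2 : K₀.1 ⊆ (KP (jpt eL 0 1 ⊤)).1 := hsubdown (hKP_ne_top _)
  have hK₀sub : K₀.1 ⊆ {e.symm none} := by
    intro z hz
    rcases mem_insert_iff.1 (hp1 hz) with h1 | ⟨w1, hw1, heq1⟩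
    · rw [h1]; rfl
    · rcases mem_insert_iff.1 (hp2 hz) with h2 | ⟨w2, hw2, heq2⟩
      · rw [h2]; rfl
      · exfalso
        have e1 : w1 = jpt eL 0 0 ⊤ := (jtop_maximal eL horder (by simp) hw1).symm
        have e2 : w2 = jpt eL 0 1 ⊤ := (jtop_maximal eL horder (by simp) hw2).symm
        have e3 : w1 = w2 := Option.some_injective L (e.symm.injective (heq1.trans heq2.symm))
        have : (0 : ℕ) = 1 := by
          have := congrArg (jfib eL) ((e1.symm.trans e3).trans e2)
          simpa using this
        omega
  have hK₀top : K₀ = topK := by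
    apply Subtype.ext
    apply Subset.antisymm hK₀sub
    intro z hz
    rw [mem_singleton_iff] at hz
    rw [hz]
    exact hmemTop K₀
  exact hK₀mem hK₀top

end YAux

/-- Let `L` be Jia's dcpo `ℕ × ℕ × (ℕ ∪ {∞})` (with the order `LJiaLE`),
carrying the Scott topology, and let `Y = (ΣL)_⊤` be the space obtained by adjoining a fresh
top point `⊤` (realized via `e : Y ≃ Option L`), whose closed sets are exactly the Scott-closed
proper subsets of `L` together with the whole space.  Then `Y` is sober but its Scott power
space `Σ K(Y)` is not sober.  In particular, there is a sober space whose Scott power space is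
not sober. -/
theorem stmt15 (L : Type) [PartialOrder L] [tL : TopologicalSpace L]
    (htopL : tL = scottTop L) (eL : L ≃ ℕ × ℕ × WithTop ℕ)
    (horder : ∀ a b : L, a ≤ b ↔ LJiaLE (eL a) (eL b))
    (Y : Type) [TopologicalSpace Y] (e : Y ≃ Option L)
    (hclosed : ∀ B : Set Y, IsClosed B ↔
      (B = univ ∨ ∃ C : Set L, IsClosed C ∧ C ≠ univ ∧ B = e ⁻¹' (Option.some '' C))) :
    SoberSp Y ∧ ¬ @SoberSp (KS Y) (scottTop (KS Y)) := by
  subst htopL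
  exact ⟨jia_soberY eL horder e hclosed, jia_notSoberKS eL horder e hclosed⟩
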